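/- Let N ≥ 4 be an integer and let v₀ = (1/√N, √((N−1)/N)) ∈ ℂ² (the Hadamard-initialized amplitude vector). Then for every φ ∈ [−π, π], the one-step target probability satisfies |(A(φ)·v₀)₀|² ≤ |(A(π)·v₀)₀|²; that is, the phase change φ = π of the classical Grover's algorithm maximizes the target probability in the first iteration. -/

import Mathlib

/-!
With `z = e^{iφ}` and `a = N - 1`, the first amplitude of `A(φ)·v₀` is `(a - 2az - z²) / (N√N)`.
For `|z| = 1` the squared modulus of the numerator is `(3a - 1)² - 4a(1 + cos φ)(a - 2 + cos φ)`.
When `N ≥ 4` both factors `1 + cos φ` and `N - 3 + cos φ` are nonnegative, and the first one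
vanishes at `φ = π`.
-/

open Real Complex Matrix

/-- The generalized Grover iteration matrix with phase `φ` for a database of size `N`. -/
noncomputable def groverA (N : ℕ) (φ : ℝ) : Matrix (Fin 2) (Fin 2) ℂ :=
  !![Complex.exp (φ * Complex.I) * ((1 - Complex.exp (φ * Complex.I)) / (N : ℂ) - 1),
     ((Real.sqrt ((N : ℝ) - 1) : ℂ) / (N : ℂ)) * (1 - Complex.exp (φ * Complex.I));
     ((Real.sqrt ((N : ℝ) - 1) : ℂ) / (N : ℂ)) * Complex.exp (φ * Complex.I) *
       (1 - Complex.exp (φ * Complex.I)),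
     -(1 / (N : ℂ) + (1 - 1 / (N : ℂ)) * Complex.exp (φ * Complex.I))]

/-- The one-step target probability: the squared modulus of the first component of `A(φ)·v`. -/
noncomputable def targetProb (N : ℕ) (φ : ℝ) (v : Fin 2 → ℂ) : ℝ :=
  ‖(groverA N φ).mulVec v 0‖ ^ 2

theorem normSq_sub_two_mul_sub_sq {z : ℂ} (hz : ‖z‖ = 1) (a : ℝ) :
    normSq (a - 2 * a * z - z ^ 2) = (3 * a - 1) ^ 2 - 4 * a * (1 + z.re) * (a - 2 + z.re) := by
  have hre : z.re * z.re + z.im * z.im = 1 := by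
    rw [← normSq_apply, normSq_eq_norm_sq, hz, one_pow]
  simp only [normSq_apply, sub_re, sub_im, mul_re, mul_im, ofReal_re, ofReal_im, pow_two,
    re_ofNat, im_ofNat]
  linear_combination (2 * a + 4 * a ^ 2 + 4 * a * z.re + 1 + z.re * z.re + z.im * z.im) * hre

noncomputable def hadamardVec (N : ℕ) : Fin 2 → ℂ :=
  ![((1 / √N : ℝ) : ℂ), ((√(((N : ℝ) - 1) / N) : ℝ) : ℂ)]

theorem groverA_mulVec_hadamardVec_zero (N : ℕ) (hN : 1 ≤ N) (φ : ℝ) :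
    (groverA N φ *ᵥ hadamardVec N) 0
      = ((N - 1 : ℝ) - 2 * (N - 1 : ℝ) * exp (φ * I) - exp (φ * I) ^ 2) / (N * √N : ℝ) := by
  have hN0 : (0 : ℝ) < N := by exact_mod_cast hN
  have hsqrt : ((√((N : ℝ) - 1) : ℝ) : ℂ) ^ 2 = N - 1 := by
    rw [← ofReal_pow, sq_sqrt (sub_nonneg.mpr (by exact_mod_cast hN))]
    push_cast; ring
  have hs : ((√N : ℝ) : ℂ) ≠ 0 := by exact_mod_cast (sqrt_pos.mpr hN0).ne'
  have hNC : (N : ℂ) ≠ 0 := by exact_mod_cast hN0.ne'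
  simp only [groverA, hadamardVec, mulVec, dotProduct, Fin.sum_univ_two, cons_val_zero,
    cons_val_one, of_apply, cons_val', empty_val', cons_val_fin_one]
  rw [sqrt_div' _ hN0.le]
  push_cast
  field_simp
  linear_combination (1 - exp (φ * I)) * hsqrt

theorem targetProb_hadamardVec (N : ℕ) (hN : 1 ≤ N) (φ : ℝ) :
    targetProb N φ (hadamardVec N)
      = ((3 * (N - 1 : ℝ) - 1) ^ 2 - 4 * (N - 1) * (1 + Real.cos φ) * (N - 3 + Real.cos φ))
        / N ^ 3 := by
  have hN0 : (0 : ℝ) ≤ N := Nat.cast_nonneg N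
  have hden : normSq ((N * √N : ℝ) : ℂ) = N ^ 3 := by
    rw [normSq_ofReal, mul_mul_mul_comm, mul_self_sqrt hN0]; ring
  have hnorm : ‖exp (φ * I)‖ = 1 := norm_exp_ofReal_mul_I φ
  rw [targetProb, groverA_mulVec_hadamardVec_zero N hN, Complex.sq_norm, normSq_div, hden,
    normSq_sub_two_mul_sub_sq hnorm, exp_ofReal_mul_I_re]
  ring

theorem stmt_1 (N : ℕ) (hN : 4 ≤ N)
    (v₀ : Fin 2 → ℂ)
    (hv : v₀ = ![((1 / Real.sqrt N : ℝ) : ℂ), ((Real.sqrt (((N : ℝ) - 1) / N) : ℝ) : ℂ)]) :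
    ∀ φ ∈ Set.Icc (-Real.pi) Real.pi,
      targetProb N φ v₀ ≤ targetProb N Real.pi v₀ := by
  obtain rfl : v₀ = hadamardVec N := hv
  intro φ _
  have hN4 : (4 : ℝ) ≤ N := by exact_mod_cast hN
  rw [targetProb_hadamardVec N (by omega), targetProb_hadamardVec N (by omega), Real.cos_pi]
  have hgain : 0 ≤ 4 * (N - 1 : ℝ) * (1 + Real.cos φ) * (N - 3 + Real.cos φ) := by
    have := neg_one_le_cos φ
    apply mul_nonneg (mul_nonneg _ _) _ <;> linarith
  gcongr ?_ / _
  linarith
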